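/- arXiv:2310.05613 — 3 statements merged into one kernel-verified Lean document; each statement's English description precedes it below -/
import Mathlib

section
/- Let k be a commutative ring with ℚ ⊆ k, A = (A_T, A_N, ι, A_0) a constraint k-algebra, and let μ_0, μ_1, …, μ_k be constraint 2-cochains on A with μ_0 the multiplication pair, such that the order-n associativity condition Σ_{i+j=n, 0≤i,j≤k} ( μ_i(μ_j(a,b), c) − μ_i(a, μ_j(b,c)) ) = 0 holds in both components for all 0 ≤ n ≤ k. Define R_{k+1} componentwise by R_{k+1}(a,b,c) = Σ_{ℓ=1}^{k} ( μ_ℓ(μ_{k+1−ℓ}(a,b), c) − μ_ℓ(a, μ_{k+1−ℓ}(b,c)) ). Then R_{k+1} is a constraint 3-cochain on A and it is a Hochschild cocycle: δR_{k+1} = 0 in both the T- and the N-component. -/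
universe u v w

/-- A constraint `k`-algebra: two associative `k`-algebras `A_T` and `A_N`,
a `k`-algebra homomorphism `ι : A_N → A_T`, and a two-sided ideal `A_0 ⊆ A_N`. -/
structure ConstraintAlgebra (k : Type u) [CommRing k] (AT : Type v) (AN : Type w)
    [Ring AT] [Ring AN] [Algebra k AT] [Algebra k AN] where
  iota : AN →ₐ[k] AT
  zero : Submodule k AN
  mul_mem_zero : ∀ x a : AN, a ∈ zero → x * a ∈ zero
  mem_zero_mul : ∀ x a : AN, a ∈ zero → a * x ∈ zero

/-- `k`-bilinearity of a map `M → M → M`. -/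
def IsBilinearFn (k : Type u) {M : Type v} [CommRing k] [AddCommGroup M] [Module k M]
    (f : M → M → M) : Prop :=
  (∀ x y z : M, f (x + y) z = f x z + f y z) ∧
  (∀ x y z : M, f x (y + z) = f x y + f x z) ∧
  (∀ (c : k) (x y : M), f (c • x) y = c • f x y) ∧
  ∀ (c : k) (x y : M), f x (c • y) = c • f x y

/-- `k`-trilinearity of a map `M → M → M → M`. -/
def IsTrilinearFn (k : Type u) {M : Type v} [CommRing k] [AddCommGroup M] [Module k M]
    (f : M → M → M → M) : Prop :=
  (∀ x y z w : M, f (x + y) z w = f x z w + f y z w) ∧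
  (∀ x y z w : M, f x (y + z) w = f x y w + f x z w) ∧
  (∀ x y z w : M, f x y (z + w) = f x y z + f x y w) ∧
  (∀ (c : k) (x y z : M), f (c • x) y z = c • f x y z) ∧
  (∀ (c : k) (x y z : M), f x (c • y) z = c • f x y z) ∧
  ∀ (c : k) (x y z : M), f x y (c • z) = c • f x y z

/-- The Hochschild differential of a trilinear map. -/
def hdel3 {M : Type v} [Ring M] (φ : M → M → M → M) : M → M → M → M → M :=
  fun a b c d => a * φ b c d - φ (a * b) c d + φ a (b * c) d - φ a b (c * d) + φ a b c * d

/-- The order-`(K+1)` obstruction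
`R_{K+1}(a,b,c) = Σ_{ℓ=1}^{K} (μ_ℓ(μ_{K+1−ℓ}(a,b),c) − μ_ℓ(a,μ_{K+1−ℓ}(b,c)))`. -/
def obstruction {M : Type v} [Ring M] (μ : ℕ → M → M → M) (K : ℕ) : M → M → M → M :=
  fun a b c =>
    ∑ ℓ ∈ Finset.Icc 1 K, (μ ℓ (μ (K + 1 - ℓ) a b) c - μ ℓ a (μ (K + 1 - ℓ) b c))

variable {k : Type u} [CommRing k] {AT : Type v} {AN : Type w}
  [Ring AT] [Ring AN] [Algebra k AT] [Algebra k AN]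

/-- A constraint `2`-cochain. -/
def IsConstraint2Cochain (A : ConstraintAlgebra k AT AN)
    (fT : AT → AT → AT) (fN : AN → AN → AN) : Prop :=
  IsBilinearFn k fT ∧ IsBilinearFn k fN ∧
    (∀ a b : AN, A.iota (fN a b) = fT (A.iota a) (A.iota b)) ∧
    ∀ a b : AN, a ∈ A.zero ∨ b ∈ A.zero → fN a b ∈ A.zero

/-- A constraint `3`-cochain. -/
def IsConstraint3Cochain (A : ConstraintAlgebra k AT AN)
    (fT : AT → AT → AT → AT) (fN : AN → AN → AN → AN) : Prop :=
  IsTrilinearFn k fT ∧ IsTrilinearFn k fN ∧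
    (∀ a b c : AN, A.iota (fN a b c) = fT (A.iota a) (A.iota b) (A.iota c)) ∧
    ∀ a b c : AN, a ∈ A.zero ∨ b ∈ A.zero ∨ c ∈ A.zero → fN a b c ∈ A.zero

section Aux
variable {M : Type*} [Ring M]

def Fcal (ν : ℕ → M → M → M) (n : ℕ) (a b c : M) : M :=
  ∑ i ∈ Finset.range (n+1), (ν i (ν (n-i) a b) c - ν i a (ν (n-i) b c))

lemma sum_Icc_one {N : Type*} [AddCommMonoid N] (f : ℕ → N) (K : ℕ) :
    ∑ ℓ ∈ Finset.Icc 1 K, f ℓ = ∑ i ∈ Finset.range K, f (i+1) := by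
  refine Finset.sum_nbij' (i := fun ℓ => ℓ - 1) (j := fun i => i + 1) ?_ ?_ ?_ ?_ ?_ <;>
    intro x hx <;> simp only [Finset.mem_Icc, Finset.mem_range] at hx ⊢
  · omega
  · omega
  · omega
  · omega
  · rw [Nat.sub_add_cancel hx.1]

lemma tri_cyc {N : Type*} [AddCommMonoid N] (m : ℕ) (g : ℕ → ℕ → ℕ → N) :
    (∑ p ∈ Finset.range (m+1), ∑ q ∈ Finset.range (m-p+1), g p q (m-p-q))
  = ∑ p ∈ Finset.range (m+1), ∑ q ∈ Finset.range (m-p+1), g q (m-p-q) p := by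
  rw [Finset.sum_sigma', Finset.sum_sigma']
  refine Finset.sum_nbij' (i := fun x => ⟨m - x.1 - x.2, x.1⟩)
    (j := fun x => ⟨x.2, m - x.1 - x.2⟩) ?_ ?_ ?_ ?_ ?_
  · rintro ⟨p, q⟩ hx
    simp only [Finset.mem_sigma, Finset.mem_range] at hx ⊢; omega
  · rintro ⟨p, q⟩ hx
    simp only [Finset.mem_sigma, Finset.mem_range] at hx ⊢; omega
  · rintro ⟨p, q⟩ hx
    simp only [Finset.mem_sigma, Finset.mem_range] at hx
    simp only [Sigma.mk.inj_iff, heq_eq_eq]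
    exact ⟨trivial, by omega⟩
  · rintro ⟨p, q⟩ hx
    simp only [Finset.mem_sigma, Finset.mem_range] at hx
    simp only [Sigma.mk.inj_iff, heq_eq_eq]
    exact ⟨by omega, trivial⟩
  · rintro ⟨p, q⟩ hx
    simp only [Finset.mem_sigma, Finset.mem_range] at hx
    have h : m - (m - p - q) - p = q := by omega
    simp only [h]

lemma tri_swap {N : Type*} [AddCommMonoid N] (m : ℕ) (g : ℕ → ℕ → ℕ → N) :
    (∑ p ∈ Finset.range (m+1), ∑ q ∈ Finset.range (m-p+1), g p q (m-p-q))
  = ∑ p ∈ Finset.range (m+1), ∑ q ∈ Finset.range (m-p+1), g q p (m-p-q) := by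
  rw [Finset.sum_sigma', Finset.sum_sigma']
  refine Finset.sum_nbij' (i := fun x => ⟨x.2, x.1⟩)
    (j := fun x => ⟨x.2, x.1⟩) ?_ ?_ ?_ ?_ ?_
  · rintro ⟨p, q⟩ hx
    simp only [Finset.mem_sigma, Finset.mem_range] at hx ⊢; omega
  · rintro ⟨p, q⟩ hx
    simp only [Finset.mem_sigma, Finset.mem_range] at hx ⊢; omega
  · rintro ⟨p, q⟩ _; rfl
  · rintro ⟨p, q⟩ _; rfl
  · rintro ⟨p, q⟩ hx
    simp only [Finset.mem_sigma, Finset.mem_range] at hx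
    have h : m - q - p = m - p - q := by omega
    simp only [h]

lemma cocycle_generic (ν : ℕ → M → M → M) (K : ℕ)
    (hadd1 : ∀ p (x y z : M), ν p (x+y) z = ν p x z + ν p y z)
    (hadd2 : ∀ p (x y z : M), ν p x (y+z) = ν p x y + ν p x z)
    (h0 : ∀ x y : M, ν 0 x y = x * y)
    (htop : ∀ x y : M, ν (K+1) x y = 0)
    (hF : ∀ n ≤ K, ∀ a b c : M, Fcal ν n a b c = 0)
    (a b c d : M) : hdel3 (obstruction ν K) a b c d = 0 := by
  have hz1 : ∀ p (z : M), ν p 0 z = 0 := by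
    intro p z
    have h := hadd1 p 0 0 z
    rw [add_zero] at h
    have h2 : ν p 0 z + 0 = ν p 0 z + ν p 0 z := by rw [add_zero]; exact h
    exact (add_left_cancel h2).symm
  have hz2 : ∀ p (x : M), ν p x 0 = 0 := by
    intro p x
    have h := hadd2 p x 0 0
    rw [add_zero] at h
    have h2 : ν p x 0 + 0 = ν p x 0 + ν p x 0 := by rw [add_zero]; exact h
    exact (add_left_cancel h2).symm
  -- obstruction = Fcal (K+1)
  have hobs : ∀ x y z : M, obstruction ν K x y z = Fcal ν (K+1) x y z := by
    intro x y z
    rw [obstruction, Fcal, Finset.sum_range_succ, Finset.sum_range_succ']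
    simp only [htop, Nat.sub_zero, Nat.sub_self, h0, zero_mul, mul_zero, sub_zero, zero_sub,
      sub_self, add_zero, neg_zero]
    rw [sum_Icc_one (fun ℓ => ν ℓ (ν (K + 1 - ℓ) x y) z - ν ℓ x (ν (K + 1 - ℓ) y z)) K]
  -- the five partial sums
  set m := K + 1 with hm
  have hS1 : (∑ p ∈ Finset.range (m+1), ν p a (Fcal ν (m-p) b c d)) = a * Fcal ν m b c d := by
    rw [Finset.sum_range_succ']
    rw [Finset.sum_eq_zero (fun p _ => by rw [hF (m-(p+1)) (by omega) b c d, hz2])]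
    simp [h0]
  have hS5 : (∑ p ∈ Finset.range (m+1), ν p (Fcal ν (m-p) a b c) d) = Fcal ν m a b c * d := by
    rw [Finset.sum_range_succ']
    rw [Finset.sum_eq_zero (fun p _ => by rw [hF (m-(p+1)) (by omega) a b c, hz1])]
    simp [h0]
  have hS2 : (∑ p ∈ Finset.range (m+1), Fcal ν (m-p) (ν p a b) c d) = Fcal ν m (a*b) c d := by
    rw [Finset.sum_range_succ']
    rw [Finset.sum_eq_zero (fun p _ => hF (m-(p+1)) (by omega) _ c d)]
    simp [h0]
  have hS3 : (∑ p ∈ Finset.range (m+1), Fcal ν (m-p) a (ν p b c) d) = Fcal ν m a (b*c) d := by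
    rw [Finset.sum_range_succ']
    rw [Finset.sum_eq_zero (fun p _ => hF (m-(p+1)) (by omega) a _ d)]
    simp [h0]
  have hS4 : (∑ p ∈ Finset.range (m+1), Fcal ν (m-p) a b (ν p c d)) = Fcal ν m a b (c*d) := by
    rw [Finset.sum_range_succ']
    rw [Finset.sum_eq_zero (fun p _ => hF (m-(p+1)) (by omega) a b _)]
    simp [h0]
  -- expansions of the five sums into double sums
  have e1 : (∑ p ∈ Finset.range (m+1), ν p a (Fcal ν (m-p) b c d))
      = (∑ p ∈ Finset.range (m+1), ∑ q ∈ Finset.range (m-p+1), ν p a (ν q (ν (m-p-q) b c) d))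
      - ∑ p ∈ Finset.range (m+1), ∑ q ∈ Finset.range (m-p+1), ν p a (ν q b (ν (m-p-q) c d)) := by
    rw [← Finset.sum_sub_distrib]
    refine Finset.sum_congr rfl (fun p _ => ?_)
    have hφ : ν p a (Fcal ν (m-p) b c d)
        = (AddMonoidHom.mk' (ν p a) (hadd2 p a)) (Fcal ν (m-p) b c d) := rfl
    rw [hφ, Fcal, map_sum]
    simp only [map_sub, AddMonoidHom.mk'_apply]
    rw [Finset.sum_sub_distrib]
  have e5 : (∑ p ∈ Finset.range (m+1), ν p (Fcal ν (m-p) a b c) d)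
      = (∑ p ∈ Finset.range (m+1), ∑ q ∈ Finset.range (m-p+1), ν p (ν q (ν (m-p-q) a b) c) d)
      - ∑ p ∈ Finset.range (m+1), ∑ q ∈ Finset.range (m-p+1), ν p (ν q a (ν (m-p-q) b c)) d := by
    rw [← Finset.sum_sub_distrib]
    refine Finset.sum_congr rfl (fun p _ => ?_)
    have hφ : ν p (Fcal ν (m-p) a b c) d
        = (AddMonoidHom.mk' (fun x => ν p x d) (fun x y => hadd1 p x y d)) (Fcal ν (m-p) a b c) :=
      rfl
    rw [hφ, Fcal, map_sum]
    simp only [map_sub, AddMonoidHom.mk'_apply]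
    rw [Finset.sum_sub_distrib]
  have e2 : (∑ p ∈ Finset.range (m+1), Fcal ν (m-p) (ν p a b) c d)
      = (∑ p ∈ Finset.range (m+1), ∑ q ∈ Finset.range (m-p+1), ν q (ν (m-p-q) (ν p a b) c) d)
      - ∑ p ∈ Finset.range (m+1), ∑ q ∈ Finset.range (m-p+1), ν q (ν p a b) (ν (m-p-q) c d) := by
    rw [← Finset.sum_sub_distrib]
    refine Finset.sum_congr rfl (fun p _ => ?_)
    rw [Fcal, Finset.sum_sub_distrib]
  have e3 : (∑ p ∈ Finset.range (m+1), Fcal ν (m-p) a (ν p b c) d)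
      = (∑ p ∈ Finset.range (m+1), ∑ q ∈ Finset.range (m-p+1), ν q (ν (m-p-q) a (ν p b c)) d)
      - ∑ p ∈ Finset.range (m+1), ∑ q ∈ Finset.range (m-p+1), ν q a (ν (m-p-q) (ν p b c) d) := by
    rw [← Finset.sum_sub_distrib]
    refine Finset.sum_congr rfl (fun p _ => ?_)
    rw [Fcal, Finset.sum_sub_distrib]
  have e4 : (∑ p ∈ Finset.range (m+1), Fcal ν (m-p) a b (ν p c d))
      = (∑ p ∈ Finset.range (m+1), ∑ q ∈ Finset.range (m-p+1), ν q (ν (m-p-q) a b) (ν p c d))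
      - ∑ p ∈ Finset.range (m+1), ∑ q ∈ Finset.range (m-p+1), ν q a (ν (m-p-q) b (ν p c d)) := by
    rw [← Finset.sum_sub_distrib]
    refine Finset.sum_congr rfl (fun p _ => ?_)
    rw [Fcal, Finset.sum_sub_distrib]
  -- reindexing: identify with the canonical P's
  have r2a : (∑ p ∈ Finset.range (m+1), ∑ q ∈ Finset.range (m-p+1), ν q (ν (m-p-q) (ν p a b) c) d)
      = ∑ p ∈ Finset.range (m+1), ∑ q ∈ Finset.range (m-p+1), ν p (ν q (ν (m-p-q) a b) c) d :=
    (tri_cyc m (fun x y z => ν x (ν y (ν z a b) c) d)).symm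
  have r2b : (∑ p ∈ Finset.range (m+1), ∑ q ∈ Finset.range (m-p+1), ν q (ν p a b) (ν (m-p-q) c d))
      = ∑ p ∈ Finset.range (m+1), ∑ q ∈ Finset.range (m-p+1), ν p (ν q a b) (ν (m-p-q) c d) := by
    exact tri_swap m (fun x y z => ν y (ν x a b) (ν z c d))
  have r3a : (∑ p ∈ Finset.range (m+1), ∑ q ∈ Finset.range (m-p+1), ν q (ν (m-p-q) a (ν p b c)) d)
      = ∑ p ∈ Finset.range (m+1), ∑ q ∈ Finset.range (m-p+1), ν p (ν q a (ν (m-p-q) b c)) d :=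
    (tri_cyc m (fun x y z => ν x (ν y a (ν z b c)) d)).symm
  have r3b : (∑ p ∈ Finset.range (m+1), ∑ q ∈ Finset.range (m-p+1), ν q a (ν (m-p-q) (ν p b c) d))
      = ∑ p ∈ Finset.range (m+1), ∑ q ∈ Finset.range (m-p+1), ν p a (ν q (ν (m-p-q) b c) d) :=
    (tri_cyc m (fun x y z => ν x a (ν y (ν z b c) d))).symm
  have r4a : (∑ p ∈ Finset.range (m+1), ∑ q ∈ Finset.range (m-p+1), ν q (ν (m-p-q) a b) (ν p c d))
      = ∑ p ∈ Finset.range (m+1), ∑ q ∈ Finset.range (m-p+1), ν p (ν q a b) (ν (m-p-q) c d) :=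
    (tri_cyc m (fun x y z => ν x (ν y a b) (ν z c d))).symm
  have r4b : (∑ p ∈ Finset.range (m+1), ∑ q ∈ Finset.range (m-p+1), ν q a (ν (m-p-q) b (ν p c d)))
      = ∑ p ∈ Finset.range (m+1), ∑ q ∈ Finset.range (m-p+1), ν p a (ν q b (ν (m-p-q) c d)) :=
    (tri_cyc m (fun x y z => ν x a (ν y b (ν z c d)))).symm
  have key : (∑ p ∈ Finset.range (m+1), ν p a (Fcal ν (m-p) b c d))
      - (∑ p ∈ Finset.range (m+1), Fcal ν (m-p) (ν p a b) c d)
      + (∑ p ∈ Finset.range (m+1), Fcal ν (m-p) a (ν p b c) d)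
      - (∑ p ∈ Finset.range (m+1), Fcal ν (m-p) a b (ν p c d))
      + (∑ p ∈ Finset.range (m+1), ν p (Fcal ν (m-p) a b c) d) = 0 := by
    rw [e1, e2, e3, e4, e5, r2a, r2b, r3a, r3b, r4a, r4b]
    abel
  rw [hS1, hS2, hS3, hS4, hS5] at key
  simp only [hdel3, hobs]
  exact key

private lemma cocycle_main {M : Type*} [Ring M] (μ : ℕ → M → M → M) (K : ℕ)
    (hadd1 : ∀ r ≤ K, ∀ x y z : M, μ r (x+y) z = μ r x z + μ r y z)
    (hadd2 : ∀ r ≤ K, ∀ x y z : M, μ r x (y+z) = μ r x y + μ r x z)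
    (h0 : ∀ x y : M, μ 0 x y = x * y)
    (hF : ∀ n ≤ K, ∀ a b c : M,
      ∑ i ∈ Finset.range (n + 1), (μ i (μ (n - i) a b) c - μ i a (μ (n - i) b c)) = 0)
    (a b c d : M) : hdel3 (obstruction μ K) a b c d = 0 := by
  set ν : ℕ → M → M → M := fun n => if n ≤ K then μ n else fun _ _ => 0 with hν
  have hνle : ∀ n ≤ K, ν n = μ n := by
    intro n hn; simp only [hν, if_pos hn]
  have hobs : ∀ x y z : M, obstruction μ K x y z = obstruction ν K x y z := by
    intro x y z
    rw [obstruction, obstruction]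
    refine Finset.sum_congr rfl (fun ℓ hℓ => ?_)
    rw [Finset.mem_Icc] at hℓ
    rw [hνle ℓ (by omega), hνle (K+1-ℓ) (by omega)]
  have hgen := cocycle_generic ν K
    (fun p x y z => by
      by_cases hp : p ≤ K
      · rw [hνle p hp]; exact hadd1 p hp x y z
      · simp only [hν, if_neg hp]; rw [add_zero])
    (fun p x y z => by
      by_cases hp : p ≤ K
      · rw [hνle p hp]; exact hadd2 p hp x y z
      · simp only [hν, if_neg hp]; rw [add_zero])
    (fun x y => by rw [hνle 0 (Nat.zero_le K)]; exact h0 x y)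
    (fun x y => by simp only [hν, if_neg (by omega : ¬ K + 1 ≤ K)])
    (fun n hn x y z => by
      have : Fcal ν n x y z = Fcal μ n x y z := by
        rw [Fcal, Fcal]
        refine Finset.sum_congr rfl (fun i hi => ?_)
        rw [Finset.mem_range] at hi
        rw [hνle i (by omega), hνle (n-i) (by omega)]
      rw [this]; exact hF n hn x y z)
    a b c d
  simp only [hdel3, hobs]
  simp only [hdel3] at hgen
  exact hgen


private lemma obstruction_trilinear_aux {k : Type u} [CommRing k] {M : Type*} [Ring M]
    [Algebra k M] (μ : ℕ → M → M → M) (K : ℕ)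
    (hb : ∀ r ≤ K, IsBilinearFn k (μ r)) : IsTrilinearFn k (obstruction μ K) := by
  have mem : ∀ ℓ ∈ Finset.Icc 1 K, ℓ ≤ K ∧ K + 1 - ℓ ≤ K := by
    intro ℓ hℓ; rw [Finset.mem_Icc] at hℓ; omega
  refine ⟨?_, ?_, ?_, ?_, ?_, ?_⟩
  · intro x y z w
    simp only [obstruction]
    rw [← Finset.sum_add_distrib]
    refine Finset.sum_congr rfl (fun ℓ hℓ => ?_)
    obtain ⟨h1, h2⟩ := mem ℓ hℓ
    have B := hb ℓ h1; have C := hb (K+1-ℓ) h2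
    rw [C.1, B.1, B.1]; abel
  · intro x y z w
    simp only [obstruction]
    rw [← Finset.sum_add_distrib]
    refine Finset.sum_congr rfl (fun ℓ hℓ => ?_)
    obtain ⟨h1, h2⟩ := mem ℓ hℓ
    have B := hb ℓ h1; have C := hb (K+1-ℓ) h2
    rw [C.2.1, B.1, C.1, B.2.1]; abel
  · intro x y z w
    simp only [obstruction]
    rw [← Finset.sum_add_distrib]
    refine Finset.sum_congr rfl (fun ℓ hℓ => ?_)
    obtain ⟨h1, h2⟩ := mem ℓ hℓ
    have B := hb ℓ h1; have C := hb (K+1-ℓ) h2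
    rw [B.2.1, C.2.1, B.2.1]; abel
  · intro cc x y z
    simp only [obstruction]
    rw [Finset.smul_sum]
    refine Finset.sum_congr rfl (fun ℓ hℓ => ?_)
    obtain ⟨h1, h2⟩ := mem ℓ hℓ
    have B := hb ℓ h1; have C := hb (K+1-ℓ) h2
    rw [smul_sub, C.2.2.1, B.2.2.1, B.2.2.1]
  · intro cc x y z
    simp only [obstruction]
    rw [Finset.smul_sum]
    refine Finset.sum_congr rfl (fun ℓ hℓ => ?_)
    obtain ⟨h1, h2⟩ := mem ℓ hℓ
    have B := hb ℓ h1; have C := hb (K+1-ℓ) h2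
    rw [smul_sub, C.2.2.2, B.2.2.1, C.2.2.1, B.2.2.2]
  · intro cc x y z
    simp only [obstruction]
    rw [Finset.smul_sum]
    refine Finset.sum_congr rfl (fun ℓ hℓ => ?_)
    obtain ⟨h1, h2⟩ := mem ℓ hℓ
    have B := hb ℓ h1; have C := hb (K+1-ℓ) h2
    rw [smul_sub, B.2.2.2, C.2.2.2, B.2.2.2]

/-- If `μ_0,…,μ_K` is an associative deformation of a constraint algebra
up to order `K`, the obstruction `R_{K+1}` is a constraint `3`-cochain which is a
Hochschild cocycle in both components. -/
theorem obstruction_is_constraint_cocycle [Algebra ℚ k]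
    (A : ConstraintAlgebra k AT AN) (K : ℕ)
    (μT : ℕ → AT → AT → AT) (μN : ℕ → AN → AN → AN)
    (hcon : ∀ r ≤ K, IsConstraint2Cochain A (μT r) (μN r))
    (h0T : ∀ a b : AT, μT 0 a b = a * b) (h0N : ∀ a b : AN, μN 0 a b = a * b)
    (hT : ∀ n ≤ K, ∀ a b c : AT,
      ∑ i ∈ Finset.range (n + 1), (μT i (μT (n - i) a b) c - μT i a (μT (n - i) b c)) = 0)
    (hN : ∀ n ≤ K, ∀ a b c : AN,
      ∑ i ∈ Finset.range (n + 1), (μN i (μN (n - i) a b) c - μN i a (μN (n - i) b c)) = 0) :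
    IsConstraint3Cochain A (obstruction μT K) (obstruction μN K) ∧
    (∀ a b c d : AT, hdel3 (obstruction μT K) a b c d = 0) ∧
    (∀ a b c d : AN, hdel3 (obstruction μN K) a b c d = 0) := by
  refine ⟨⟨?_, ?_, ?_, ?_⟩, ?_, ?_⟩
  · exact obstruction_trilinear_aux μT K (fun r hr => (hcon r hr).1)
  · exact obstruction_trilinear_aux μN K (fun r hr => (hcon r hr).2.1)
  · -- iota compatibility
    intro a b c
    simp only [obstruction]
    rw [map_sum]
    refine Finset.sum_congr rfl (fun ℓ hℓ => ?_)
    rw [Finset.mem_Icc] at hℓ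
    have h1 : ℓ ≤ K := hℓ.2
    have h2 : K + 1 - ℓ ≤ K := by omega
    rw [map_sub, (hcon ℓ h1).2.2.1, (hcon ℓ h1).2.2.1,
      (hcon (K+1-ℓ) h2).2.2.1, (hcon (K+1-ℓ) h2).2.2.1]
  · -- ideal property
    intro a b c h
    simp only [obstruction]
    refine Submodule.sum_mem _ (fun ℓ hℓ => ?_)
    rw [Finset.mem_Icc] at hℓ
    have H1 := (hcon ℓ hℓ.2).2.2.2
    have H2 := (hcon (K+1-ℓ) (by omega)).2.2.2
    rcases h with h|h|h
    · exact sub_mem (H1 _ _ (Or.inl (H2 _ _ (Or.inl h)))) (H1 _ _ (Or.inl h))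
    · exact sub_mem (H1 _ _ (Or.inl (H2 _ _ (Or.inr h)))) (H1 _ _ (Or.inr (H2 _ _ (Or.inl h))))
    · exact sub_mem (H1 _ _ (Or.inr h)) (H1 _ _ (Or.inr (H2 _ _ (Or.inr h))))
  · -- T cocycle
    intro a b c d
    exact cocycle_main μT K (fun r hr => ((hcon r hr).1).1) (fun r hr => ((hcon r hr).1).2.1)
      h0T hT a b c d
  · intro a b c d
    exact cocycle_main μN K (fun r hr => ((hcon r hr).2.1).1) (fun r hr => ((hcon r hr).2.1).2.1)
      h0N hN a b c d
end Aux
end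

section
/- Let k be a commutative ring with ℚ ⊆ k, A = (A_T, A_N, ι, A_0) a constraint k-algebra, and let μ_0, μ_1, …, μ_k be constraint 2-cochains on A with μ_0 the multiplication pair, satisfying the order-n associativity condition Σ_{i+j=n} ( μ_i(μ_j(a,b), c) − μ_i(a, μ_j(b,c)) ) = 0 in both components for all 0 ≤ n ≤ k. Define R_{k+1}(a,b,c) = Σ_{ℓ=1}^{k} ( μ_ℓ(μ_{k+1−ℓ}(a,b), c) − μ_ℓ(a, μ_{k+1−ℓ}(b,c)) ) componentwise. Then there exists a constraint 2-cochain μ_{k+1} such that μ_0, …, μ_{k+1} satisfies the order-n associativity condition for all 0 ≤ n ≤ k+1 if and only if there exists a constraint 2-cochain ν with δν = R_{k+1} in both components; and in that case every such ν yields an extension by setting μ_{k+1} = ν. -/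
universe u v w

/-- The Hochschild differential of a bilinear map:
`(δφ)(a,b,c) = a·φ(b,c) − φ(a·b,c) + φ(a,b·c) − φ(a,b)·c`. -/
def hdel2 {M : Type v} [Ring M] (φ : M → M → M) : M → M → M → M :=
  fun a b c => a * φ b c - φ (a * b) c + φ a (b * c) - φ a b * c

/-- Order-by-order associativity up to order `K`. -/
def AssocUpTo {M : Type v} [Ring M] (μ : ℕ → M → M → M) (K : ℕ) : Prop :=
  ∀ n ≤ K, ∀ a b c : M,
    ∑ i ∈ Finset.range (n + 1), (μ i (μ (n - i) a b) c - μ i a (μ (n - i) b c)) = 0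

variable {k : Type u} [CommRing k] {AT : Type v} {AN : Type w}
  [Ring AT] [Ring AN] [Algebra k AT] [Algebra k AN]

lemma update_sum_eq {M : Type*} [Ring M] (μ : ℕ → M → M → M) (K : ℕ) (ν : M → M → M)
    (n : ℕ) (hn : n ≤ K) (a b c : M) :
    ∑ i ∈ Finset.range (n + 1),
      ((Function.update μ (K + 1) ν) i ((Function.update μ (K + 1) ν) (n - i) a b) c
        - (Function.update μ (K + 1) ν) i a ((Function.update μ (K + 1) ν) (n - i) b c)) =
    ∑ i ∈ Finset.range (n + 1), (μ i (μ (n - i) a b) c - μ i a (μ (n - i) b c)) := by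
  apply Finset.sum_congr rfl
  intro i hi
  simp only [Finset.mem_range] at hi
  have h1 : i ≠ K + 1 := by omega
  have h2 : n - i ≠ K + 1 := by omega
  rw [Function.update_of_ne h1, Function.update_of_ne h2]

lemma top_sum_eq {M : Type*} [Ring M] (μ : ℕ → M → M → M) (K : ℕ) (ν : M → M → M)
    (h0 : ∀ a b : M, μ 0 a b = a * b) (a b c : M) :
    ∑ i ∈ Finset.range (K + 1 + 1),
      ((Function.update μ (K + 1) ν) i ((Function.update μ (K + 1) ν) (K + 1 - i) a b) c
        - (Function.update μ (K + 1) ν) i a ((Function.update μ (K + 1) ν) (K + 1 - i) b c)) =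
    obstruction μ K a b c - hdel2 ν a b c := by
  rw [Finset.sum_range_succ, Finset.sum_range_succ']
  have hmid : ∀ i ∈ Finset.range K,
      ((Function.update μ (K + 1) ν) (i + 1)
          ((Function.update μ (K + 1) ν) (K + 1 - (i + 1)) a b) c
        - (Function.update μ (K + 1) ν) (i + 1) a
          ((Function.update μ (K + 1) ν) (K + 1 - (i + 1)) b c)) =
      (μ (i + 1) (μ (K + 1 - (i + 1)) a b) c - μ (i + 1) a (μ (K + 1 - (i + 1)) b c)) := by
    intro i hi
    simp only [Finset.mem_range] at hi
    have h1 : i + 1 ≠ K + 1 := by omega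
    have h2 : K + 1 - (i + 1) ≠ K + 1 := by omega
    rw [Function.update_of_ne h1, Function.update_of_ne h2]
  rw [Finset.sum_congr rfl hmid]
  have hobs : obstruction μ K a b c =
      ∑ i ∈ Finset.range K, (μ (i + 1) (μ (K + 1 - (i + 1)) a b) c
        - μ (i + 1) a (μ (K + 1 - (i + 1)) b c)) := by
    unfold obstruction
    rw [show Finset.Icc 1 K = Finset.Ico 1 (K + 1) from by rw [Finset.Ico_add_one_right_eq_Icc],
      Finset.sum_Ico_eq_sum_range]
    apply Finset.sum_congr rfl
    intro i _
    rw [Nat.add_comm 1 i]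
  rw [hobs]
  have e1 : (Function.update μ (K + 1) ν) 0 = μ 0 := Function.update_of_ne (by omega) _ _
  have e2 : (Function.update μ (K + 1) ν) (K + 1) = ν := Function.update_self _ _ _
  have e3 : K + 1 - 0 = K + 1 := rfl
  have e4 : K + 1 - (K + 1) = 0 := by omega
  rw [e3, e4, e1, e2]
  simp only [h0, hdel2]
  abel

lemma assoc_update {M : Type*} [Ring M] (μ : ℕ → M → M → M) (K : ℕ) (ν : M → M → M)
    (h0 : ∀ a b : M, μ 0 a b = a * b) (hA : AssocUpTo μ K)
    (hδ : ∀ a b c : M, hdel2 ν a b c = obstruction μ K a b c) :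
    AssocUpTo (Function.update μ (K + 1) ν) (K + 1) := by
  intro n hn a b c
  rcases Nat.lt_or_ge n (K + 1) with h | h
  · rw [update_sum_eq μ K ν n (by omega)]
    exact hA n (by omega) a b c
  · have hn' : n = K + 1 := by omega
    subst hn'
    rw [top_sum_eq μ K ν h0, hδ a b c, sub_self]

lemma assoc_update_rev {M : Type*} [Ring M] (μ : ℕ → M → M → M) (K : ℕ) (ν : M → M → M)
    (h0 : ∀ a b : M, μ 0 a b = a * b)
    (hA : AssocUpTo (Function.update μ (K + 1) ν) (K + 1)) :
    ∀ a b c : M, hdel2 ν a b c = obstruction μ K a b c := by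
  intro a b c
  have := hA (K + 1) le_rfl a b c
  rw [top_sum_eq μ K ν h0] at this
  exact (sub_eq_zero.mp this).symm

/-- A deformation up to order `K` can be extended to order `K+1`
iff the obstruction `R_{K+1}` is the Hochschild coboundary of a constraint `2`-cochain,
and in that case every such cochain yields an extension. -/
theorem extension_iff_obstruction_exact [Algebra ℚ k]
    (A : ConstraintAlgebra k AT AN) (K : ℕ)
    (μT : ℕ → AT → AT → AT) (μN : ℕ → AN → AN → AN)
    (hcon : ∀ r ≤ K, IsConstraint2Cochain A (μT r) (μN r))
    (h0T : ∀ a b : AT, μT 0 a b = a * b) (h0N : ∀ a b : AN, μN 0 a b = a * b)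
    (hT : AssocUpTo μT K) (hN : AssocUpTo μN K) :
    ((∃ (νT : AT → AT → AT) (νN : AN → AN → AN),
        IsConstraint2Cochain A νT νN ∧
        AssocUpTo (Function.update μT (K + 1) νT) (K + 1) ∧
        AssocUpTo (Function.update μN (K + 1) νN) (K + 1)) ↔
      (∃ (νT : AT → AT → AT) (νN : AN → AN → AN),
        IsConstraint2Cochain A νT νN ∧
        (∀ a b c : AT, hdel2 νT a b c = obstruction μT K a b c) ∧
        (∀ a b c : AN, hdel2 νN a b c = obstruction μN K a b c))) ∧
    (∀ (νT : AT → AT → AT) (νN : AN → AN → AN),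
      IsConstraint2Cochain A νT νN →
      (∀ a b c : AT, hdel2 νT a b c = obstruction μT K a b c) →
      (∀ a b c : AN, hdel2 νN a b c = obstruction μN K a b c) →
      AssocUpTo (Function.update μT (K + 1) νT) (K + 1) ∧
      AssocUpTo (Function.update μN (K + 1) νN) (K + 1)) := by
  constructor
  · constructor
    · rintro ⟨νT, νN, hc, hAT, hAN⟩
      exact ⟨νT, νN, hc, assoc_update_rev μT K νT h0T hAT,
        assoc_update_rev μN K νN h0N hAN⟩
    · rintro ⟨νT, νN, hc, hδT, hδN⟩
      exact ⟨νT, νN, hc, assoc_update μT K νT h0T hT hδT,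
        assoc_update μN K νN h0N hN hδN⟩
  · intro νT νN _ hδT hδN
    exact ⟨assoc_update μT K νT h0T hT hδT, assoc_update μN K νN h0N hN hδN⟩
end

section
/- Fix natural numbers 0 < n_0 < n_N < n_T and let C = ℝ^{n_N} × {0} ⊆ ℝ^{n_T}. Let D = ∂²/∂x¹∂x^{n_T} acting on smooth functions ℝ^{n_T} → ℝ. Then: (1) the function h(x) = x¹·x^{n_T} lies in the 0-component, but D(h) = 1 does not lie in the 0-component; hence D is not a constraint linear map. (2) Nevertheless, its Hochschild coboundary δD is a constraint bilinear map lying in the 0-component: for all smooth f, g in the N-component, (δD)(f,g) = −(∂f/∂x¹)(∂g/∂x^{n_T}) − (∂f/∂x^{n_T})(∂g/∂x¹) vanishes at every point of C. -/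
/-!
For the second-order operator `D = ∂ᵢ∂ⱼ` the Leibniz rule makes the second-order terms of
`D (f g)` cancel in `δD`, leaving `δD(f, g) = -∂ᵢf ∂ⱼg - ∂ⱼf ∂ᵢg`. With `i = 1` this vanishes on
`C` as soon as `∂₁f` and `∂₁g` do: for `N`-component functions by definition, and for
`0`-component functions because `∂₁` is tangent to `C`. A smooth function vanishing on `C` has
all its tangential derivatives vanishing on `C`, so it lies in the `N`-component (`n₀ ≤ n_N`).
On the other hand `D (x¹ x^{n_T}) = 1` although `x¹ x^{n_T}` vanishes on `C`.
-/

/-- The partial derivative in the `i`-th coordinate direction on `ℝ^{n_T}`. -/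
noncomputable def pderiv1 {nT : ℕ} (i : Fin nT) (f : (Fin nT → ℝ) → ℝ) :
    (Fin nT → ℝ) → ℝ :=
  fun x => fderiv ℝ f x (Pi.single i 1)

/-- Membership in the coordinate subspace `C = ℝ^{n_N} × {0}`
(`0`-indexed: `x^i = 0` for `n_N ≤ i`). -/
def OnC {nT : ℕ} (nN : ℕ) (x : Fin nT → ℝ) : Prop :=
  ∀ i : Fin nT, nN ≤ i.val → x i = 0

/-- `f` lies in the `N`-component: `∂f/∂x^i` vanishes on `C` for all `i ∈ {1,…,n_0}`. -/
def MemN {nT : ℕ} (n0 nN : ℕ) (f : (Fin nT → ℝ) → ℝ) : Prop :=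
  ∀ i : Fin nT, i.val < n0 → ∀ x, OnC nN x → pderiv1 i f x = 0

/-- `f` lies in the `0`-component: `f` vanishes on `C`. -/
def MemZ {nT : ℕ} (nN : ℕ) (f : (Fin nT → ℝ) → ℝ) : Prop :=
  ∀ x, OnC nN x → f x = 0

/-- A bilinear map on smooth functions is constraint if it maps pairs of `N`-component
functions to the `N`-component and maps a pair into the `0`-component whenever one
argument is in the `0`-component and the other in the `N`-component. -/
def IsConstraintBilin {nT : ℕ} (n0 nN : ℕ)
    (B : ((Fin nT → ℝ) → ℝ) → ((Fin nT → ℝ) → ℝ) → (Fin nT → ℝ) → ℝ) : Prop :=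
  (∀ f g, ContDiff ℝ (⊤ : ℕ∞) f → ContDiff ℝ (⊤ : ℕ∞) g →
      MemN n0 nN f → MemN n0 nN g → MemN n0 nN (B f g)) ∧
  ∀ f g, ContDiff ℝ (⊤ : ℕ∞) f → ContDiff ℝ (⊤ : ℕ∞) g →
      ((MemZ nN f ∧ MemN n0 nN g) ∨ (MemN n0 nN f ∧ MemZ nN g)) → MemZ nN (B f g)

/-- The Hochschild coboundary of a linear operator:
`(δD)(f,g) = f·D(g) − D(f·g) + D(f)·g`. -/
def hdelOp {nT : ℕ} (D : ((Fin nT → ℝ) → ℝ) → (Fin nT → ℝ) → ℝ)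
    (f g : (Fin nT → ℝ) → ℝ) : (Fin nT → ℝ) → ℝ :=
  fun x => f x * D g x - D (fun y => f y * g y) x + D f x * g x

section

variable {nT : ℕ}

lemma OnC.add_smul_single {nN : ℕ} {x : Fin nT → ℝ} (hx : OnC nN x) {i : Fin nT}
    (hi : i.val < nN) (t : ℝ) : OnC nN (x + t • Pi.single i 1) := by
  intro j hj
  have hji : j ≠ i := by rintro rfl; omega
  simp [hx j hj, Pi.single_eq_of_ne hji]

lemma MemZ.pderiv1_eq_zero {nN : ℕ} {φ : (Fin nT → ℝ) → ℝ} (hz : MemZ nN φ) {i : Fin nT}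
    (hi : i.val < nN) {x : Fin nT → ℝ} (hx : OnC nN x) (hφ : DifferentiableAt ℝ φ x) :
    pderiv1 i φ x = 0 := by
  have hline : (fun t : ℝ => φ (x + t • Pi.single i 1)) = fun _ => 0 :=
    funext fun t => hz _ (hx.add_smul_single hi t)
  rw [pderiv1, ← hφ.lineDeriv_eq_fderiv, lineDeriv, hline, deriv_const]

lemma MemZ.memN {n0 nN : ℕ} (hn : n0 ≤ nN) {φ : (Fin nT → ℝ) → ℝ} (hz : MemZ nN φ)
    (hφ : Differentiable ℝ φ) : MemN n0 nN φ :=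
  fun _ hi _ hx => hz.pderiv1_eq_zero (by omega) hx (hφ _)

lemma ContDiff.pderiv1 {n : WithTop ℕ∞} {f : (Fin nT → ℝ) → ℝ} (hf : ContDiff ℝ (n + 1) f)
    (i : Fin nT) : ContDiff ℝ n (pderiv1 i f) :=
  (hf.fderiv_right le_rfl).clm_apply contDiff_const

lemma pderiv1_const (i : Fin nT) (c : ℝ) : pderiv1 i (fun _ => c) = fun _ => 0 := by
  funext x
  simp [pderiv1]

lemma pderiv1_apply (i j : Fin nT) :
    pderiv1 i (fun y : Fin nT → ℝ => y j) = fun _ => (Pi.single i 1 : Fin nT → ℝ) j := by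
  funext x
  simp [pderiv1, (hasFDerivAt_apply j x).fderiv]

lemma pderiv1_add (i : Fin nT) {f g : (Fin nT → ℝ) → ℝ} {x : Fin nT → ℝ}
    (hf : DifferentiableAt ℝ f x) (hg : DifferentiableAt ℝ g x) :
    pderiv1 i (fun y => f y + g y) x = pderiv1 i f x + pderiv1 i g x := by
  simp [pderiv1, fderiv_fun_add hf hg]

lemma pderiv1_mul (i : Fin nT) {f g : (Fin nT → ℝ) → ℝ} {x : Fin nT → ℝ}
    (hf : DifferentiableAt ℝ f x) (hg : DifferentiableAt ℝ g x) :
    pderiv1 i (fun y => f y * g y) x = f x * pderiv1 i g x + pderiv1 i f x * g x := by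
  simp only [pderiv1, fderiv_fun_mul hf hg, add_apply, smul_apply, smul_eq_mul,
    add_right_inj]
  ring

lemma pderiv1_pderiv1_mul (i j : Fin nT) {f g : (Fin nT → ℝ) → ℝ} (hf : ContDiff ℝ 2 f)
    (hg : ContDiff ℝ 2 g) (x : Fin nT → ℝ) :
    pderiv1 i (pderiv1 j (fun y => f y * g y)) x
      = f x * pderiv1 i (pderiv1 j g) x + pderiv1 i f x * pderiv1 j g x
        + pderiv1 j f x * pderiv1 i g x + pderiv1 i (pderiv1 j f) x * g x := by
  have hf1 : Differentiable ℝ f := hf.differentiable (by norm_num)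
  have hg1 : Differentiable ℝ g := hg.differentiable (by norm_num)
  have hfj : Differentiable ℝ (pderiv1 j f) := (hf.pderiv1 j).differentiable one_ne_zero
  have hgj : Differentiable ℝ (pderiv1 j g) := (hg.pderiv1 j).differentiable one_ne_zero
  have hleib : pderiv1 j (fun y => f y * g y)
      = fun y => f y * pderiv1 j g y + pderiv1 j f y * g y :=
    funext fun y => pderiv1_mul j (hf1 y) (hg1 y)
  rw [hleib, pderiv1_add i ((hf1 x).fun_mul (hgj x)) ((hfj x).fun_mul (hg1 x)),
    pderiv1_mul i (hf1 x) (hgj x), pderiv1_mul i (hfj x) (hg1 x)]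
  ring

lemma hdelOp_pderiv1_pderiv1 (i j : Fin nT) {f g : (Fin nT → ℝ) → ℝ} (hf : ContDiff ℝ 2 f)
    (hg : ContDiff ℝ 2 g) (x : Fin nT → ℝ) :
    hdelOp (fun f => pderiv1 i (pderiv1 j f)) f g x
      = -(pderiv1 i f x * pderiv1 j g x) - pderiv1 j f x * pderiv1 i g x := by
  rw [hdelOp, pderiv1_pderiv1_mul i j hf hg x]
  ring

lemma pderiv1_pderiv1_apply_mul_apply {i j : Fin nT} (hij : i ≠ j) (x : Fin nT → ℝ) :
    pderiv1 i (pderiv1 j (fun y : Fin nT → ℝ => y i * y j)) x = 1 := by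
  have hcoord (k : Fin nT) : ContDiff ℝ 2 (fun y : Fin nT → ℝ => y k) := contDiff_apply ℝ ℝ k
  rw [pderiv1_pderiv1_mul i j (hcoord i) (hcoord j) x]
  simp [pderiv1_apply, pderiv1_const, Pi.single_eq_of_ne hij, Pi.single_eq_of_ne hij.symm]

lemma hdelOp_pderiv1_pderiv1_eq_zero (i j : Fin nT) {f g : (Fin nT → ℝ) → ℝ}
    (hf : ContDiff ℝ 2 f) (hg : ContDiff ℝ 2 g) {x : Fin nT → ℝ} (hfx : pderiv1 i f x = 0)
    (hgx : pderiv1 i g x = 0) : hdelOp (fun f => pderiv1 i (pderiv1 j f)) f g x = 0 := by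
  rw [hdelOp_pderiv1_pderiv1 i j hf hg, hfx, hgx]
  ring

lemma differentiable_hdelOp_pderiv1_pderiv1 (i j : Fin nT) {f g : (Fin nT → ℝ) → ℝ}
    (hf : ContDiff ℝ 2 f) (hg : ContDiff ℝ 2 g) :
    Differentiable ℝ (hdelOp (fun f => pderiv1 i (pderiv1 j f)) f g) := by
  have hd (φ : (Fin nT → ℝ) → ℝ) (hφ : ContDiff ℝ 2 φ) (k : Fin nT) :
      Differentiable ℝ (pderiv1 k φ) := (hφ.pderiv1 k).differentiable one_ne_zero
  rw [funext (hdelOp_pderiv1_pderiv1 i j hf hg)]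
  exact (((hd f hf i).mul (hd g hg j)).neg).sub ((hd f hf j).mul (hd g hg i))

end

/-- For `D = ∂²/∂x¹∂x^{n_T}`: the function `h = x¹·x^{n_T}` lies in
the `0`-component but `D h = 1` does not, so `D` is not a constraint map; nevertheless
`δD` is a constraint bilinear map lying in the `0`-component: on smooth `N`-component
functions it is `−∂₁f·∂_{n_T}g − ∂_{n_T}f·∂₁g`, which vanishes at every point of `C`. -/
theorem coboundary_of_nonconstraint_operator (n0 nN nT : ℕ)
    (h1 : 0 < n0) (h2 : n0 < nN) (h3 : nN < nT) :
    let i0 : Fin nT := ⟨0, by omega⟩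
    let iT : Fin nT := ⟨nT - 1, by omega⟩
    let D : ((Fin nT → ℝ) → ℝ) → (Fin nT → ℝ) → ℝ := fun f => pderiv1 i0 (pderiv1 iT f)
    let h : (Fin nT → ℝ) → ℝ := fun x => x i0 * x iT
    MemZ nN h ∧
    (∀ x, D h x = 1) ∧
    ¬ MemZ nN (D h) ∧
    ¬ ((∀ f, ContDiff ℝ (⊤ : ℕ∞) f → MemN n0 nN f → MemN n0 nN (D f)) ∧
        (∀ f, ContDiff ℝ (⊤ : ℕ∞) f → MemZ nN f → MemZ nN (D f))) ∧
    IsConstraintBilin n0 nN (hdelOp D) ∧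
    (∀ f g : (Fin nT → ℝ) → ℝ, ContDiff ℝ (⊤ : ℕ∞) f → ContDiff ℝ (⊤ : ℕ∞) g →
      MemN n0 nN f → MemN n0 nN g →
      (∀ x, hdelOp D f g x
          = -(pderiv1 i0 f x * pderiv1 iT g x) - pderiv1 iT f x * pderiv1 i0 g x) ∧
      (∀ x, OnC nN x → hdelOp D f g x = 0)) := by
  intro i0 iT D h
  have hC2 {f : (Fin nT → ℝ) → ℝ} (hf : ContDiff ℝ (⊤ : ℕ∞) f) : ContDiff ℝ 2 f :=
    hf.of_le (by norm_cast)
  have hZh : MemZ nN h := fun x hx => by simp [h, hx iT (by simp [iT]; omega)]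
  have hDh : ∀ x, D h x = 1 :=
    pderiv1_pderiv1_apply_mul_apply (Fin.ne_of_val_ne (by simp [i0, iT]; omega))
  have hnotZ : ¬ MemZ nN (D h) := fun hZ => by simpa [hDh] using hZ 0 fun _ _ => rfl
  have hh : ContDiff ℝ (⊤ : ℕ∞) h := (contDiff_apply ℝ ℝ i0).mul (contDiff_apply ℝ ℝ iT)
  have hδN (f g : (Fin nT → ℝ) → ℝ) (hf : ContDiff ℝ (⊤ : ℕ∞) f)
      (hg : ContDiff ℝ (⊤ : ℕ∞) g) (hNf : MemN n0 nN f) (hNg : MemN n0 nN g) :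
      MemZ nN (hdelOp D f g) := fun x hx =>
    hdelOp_pderiv1_pderiv1_eq_zero i0 iT (hC2 hf) (hC2 hg) (hNf i0 h1 x hx) (hNg i0 h1 x hx)
  refine ⟨hZh, hDh, hnotZ, fun hD => hnotZ (hD.2 h hh hZh), ⟨?_, ?_⟩, fun f g hf hg hNf hNg =>
    ⟨hdelOp_pderiv1_pderiv1 i0 iT (hC2 hf) (hC2 hg), hδN f g hf hg hNf hNg⟩⟩
  · exact fun f g hf hg hNf hNg => (hδN f g hf hg hNf hNg).memN h2.le
      (differentiable_hdelOp_pderiv1_pderiv1 i0 iT (hC2 hf) (hC2 hg))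
  · have hi0 : i0.val < nN := by simp [i0]; omega
    rintro f g hf hg (⟨hZf, hNg⟩ | ⟨hNf, hZg⟩) x hx
    · exact hdelOp_pderiv1_pderiv1_eq_zero i0 iT (hC2 hf) (hC2 hg)
        (hZf.pderiv1_eq_zero hi0 hx (hf.differentiable (by simp) x)) (hNg i0 h1 x hx)
    · exact hdelOp_pderiv1_pderiv1_eq_zero i0 iT (hC2 hf) (hC2 hg)
        (hNf i0 h1 x hx) (hZg.pderiv1_eq_zero hi0 hx (hg.differentiable (by simp) x))
end
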